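/- Let G = (V,E) be a finite simple graph, u ∈ V, S ⊆ N(u), and V' = V − u. Fix an ordering of E in which all edges incident to u are largest. Let F be a broken-circuit-free forest in G[V'] each of whose non-trivial components contains exactly one vertex of S and such that every vertex of S lies in a non-trivial component of F. Then T = F ∪ {us : s ∈ S} is a tree, and T contains a broken circuit if and only if there exists s ∈ S such that the component of F containing s also contains some t ∈ N(u) with us < ut in the edge ordering. -/

import Mathlib

open Finset

attribute [local instance] Classical.propDecidable

variable {V : Type} [Fintype V] [DecidableEq V]

/-- Vertex support of an edge set: the non-isolated vertices. -/
def edgeSupp (F : Finset (Sym2 V)) : Finset V :=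
  Finset.univ.filter fun v => ∃ e ∈ F, v ∈ e

/-- The graph obtained from `G` by deleting the vertex `u` (keeping it as an
isolated vertex). -/
def delV (G : SimpleGraph V) (u : V) : SimpleGraph V where
  Adj a b := G.Adj a b ∧ a ≠ u ∧ b ≠ u
  symm := ⟨fun a b ⟨h, ha, hb⟩ => ⟨h.symm, hb, ha⟩⟩
  loopless := ⟨fun a ⟨h, _, _⟩ => G.loopless.irrefl a h⟩

/-- `C` is the edge set of a cycle of `G`. -/
def IsCircuit (G : SimpleGraph V) (C : Finset (Sym2 V)) : Prop :=
  ∃ (v : V) (w : G.Walk v v), w.IsCycle ∧ C = w.edges.toFinset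

/-- `B` is a broken circuit of `G` w.r.t. the edge ordering `ord`. -/
def IsBrokenCircuit (G : SimpleGraph V) (ord : Sym2 V → ℕ) (B : Finset (Sym2 V)) : Prop :=
  ∃ C, IsCircuit G C ∧ ∃ e ∈ C, (∀ f ∈ C, ord f ≤ ord e) ∧ B = C.erase e

/-- `F` is a broken-circuit-free set of edges of `G`. -/
def IsBCF (G : SimpleGraph V) (ord : Sym2 V → ℕ) (F : Finset (Sym2 V)) : Prop :=
  F ⊆ G.edgeFinset ∧ ∀ B, IsBrokenCircuit G ord B → ¬ B ⊆ F

/-- `F` is (the edge set of) a tree in `G`: a connected acyclic edge subset. -/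
def IsSubtree (G : SimpleGraph V) (F : Finset (Sym2 V)) : Prop :=
  F ⊆ G.edgeFinset ∧ (SimpleGraph.fromEdgeSet (↑F : Set (Sym2 V))).IsAcyclic ∧
    ∀ a ∈ edgeSupp F, ∀ b ∈ edgeSupp F,
      (SimpleGraph.fromEdgeSet (↑F : Set (Sym2 V))).Reachable a b

/-!
Let `T = F ∪ {us : s ∈ S}` and let `C` be a circuit of `G` with largest edge `e` such that
`C - e ⊆ T`. If `C` avoided `u`, then `C - e` would be a broken circuit of `G - u` inside `F`.
So `C` passes through `u`, and since the edges at `u` are the largest, `e = ut`; hence `C`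
consists of `us`, `ut` and an `s`–`t` path in `F`, with `s ∈ S`. If even `C ⊆ T`, then `t ∈ S`
too, and the component of `s` in `F` would meet `S` twice: so `T` is acyclic. It is connected
because each non-trivial component of `F` is joined to `u` through its vertex in `S`. For broken
circuits, `us ≤ ut` is strict by injectivity of the ordering; conversely, given such `s` and `t`,
the path in `F` closes up with `us` and `ut` to a circuit whose largest edge is `ut`.
-/

namespace SimpleGraph

variable {α : Type*} {G : SimpleGraph α}

namespace Walk

theorem IsCycle.exists_isPath_edges_toFinset_eq [DecidableEq α] {u : α} {c : G.Walk u u}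
    (hc : c.IsCycle) :
    ∃ s t, G.Adj u s ∧ G.Adj u t ∧ ∃ q : G.Walk s t, q.IsPath ∧ u ∉ q.support ∧ s ≠ t ∧
      c.edges.toFinset = insert s(u, s) (insert s(u, t) q.edges.toFinset) := by
  cases c with
  | nil => exact absurd hc not_isCycle_nil
  | @cons _ s _ hs p =>
    obtain ⟨hp, hus⟩ := (cons_isCycle_iff p hs).mp hc
    obtain ⟨t, ht, q, hq⟩ := exists_eq_cons_of_ne hs.ne p.reverse
    have hqpath : q.IsPath ∧ u ∉ q.support := by
      rw [← cons_isPath_iff ht, ← hq, isPath_reverse_iff]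
      exact hp
    have hedges : p.edges.toFinset = insert s(u, t) q.reverse.edges.toFinset := by
      rw [← List.toFinset_reverse, ← edges_reverse, hq]
      simp
    refine ⟨s, t, hs, ht, q.reverse, hqpath.1.reverse, by simpa using hqpath.2, ?_, ?_⟩
    · rintro rfl
      exact hus (List.mem_toFinset.mp (hedges ▸ Finset.mem_insert_self _ _))
    · rw [edges_cons, List.toFinset_cons, hedges]

theorem isCycle_cons_reverse_cons {u s t : α} (hs : G.Adj u s) (ht : G.Adj u t)
    {q : G.Walk s t} (hq : q.IsPath) (hu : u ∉ q.support) (hst : s ≠ t) :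
    (cons hs (cons ht q.reverse).reverse).IsCycle := by
  refine (cons_isCycle_iff _ hs).mpr ⟨?_, ?_⟩
  · rw [isPath_reverse_iff, cons_isPath_iff, isPath_reverse_iff, support_reverse, List.mem_reverse]
    exact ⟨hq, hu⟩
  · simp only [edges_reverse, edges_cons, List.mem_reverse, List.mem_cons]
    rintro (h | h)
    · exact hst (Sym2.congr_right.mp h)
    · exact hu (q.fst_mem_support_of_mem_edges (by simpa using h))

end Walk

theorem reachable_fromEdgeSet_of_forall_mem_edges {s : Set (Sym2 α)} {a b : α}
    (q : G.Walk a b) (hq : ∀ e ∈ q.edges, e ∈ s) : (fromEdgeSet s).Reachable a b :=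
  ⟨q.transfer _ fun e he => by
    rw [edgeSet_fromEdgeSet]
    exact ⟨hq e he, G.not_isDiag_of_mem_edgeSet (q.edges_subset_edgeSet he)⟩⟩

theorem Reachable.exists_isPath_of_fromEdgeSet {s : Set (Sym2 α)} (hs : s ⊆ G.edgeSet)
    {a b : α} (h : (fromEdgeSet s).Reachable a b) :
    ∃ q : G.Walk a b, q.IsPath ∧ ∀ e ∈ q.edges, e ∈ s := by
  obtain ⟨p⟩ := h
  have hp : ∀ e ∈ (p.toPath : (fromEdgeSet s).Walk a b).edges, e ∈ s := fun e he =>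
    ((edgeSet_fromEdgeSet s).le ((p.toPath : (fromEdgeSet s).Walk a b).edges_subset_edgeSet he)).1
  refine ⟨(p.toPath : (fromEdgeSet s).Walk a b).transfer G fun e he => hs (hp e he),
    p.toPath.2.transfer _, ?_⟩
  rw [Walk.edges_transfer]
  exact hp

end SimpleGraph

open SimpleGraph Walk

section Circuits

variable {α : Type} {G : SimpleGraph α} {u : α}

theorem mem_edgeSet_delV {e : Sym2 α} : e ∈ (delV G u).edgeSet ↔ e ∈ G.edgeSet ∧ u ∉ e := by
  induction e using Sym2.ind with
  | _ a b => simp [delV, eq_comm]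

variable [DecidableEq α] {C : Finset (Sym2 α)}

theorem IsCircuit.mem_edgeSet (hC : IsCircuit G C) {e : Sym2 α} (he : e ∈ C) :
    e ∈ G.edgeSet := by
  obtain ⟨v, c, -, rfl⟩ := hC
  exact c.edges_subset_edgeSet (List.mem_toFinset.mp he)

theorem IsCircuit.nonempty (hC : IsCircuit G C) : C.Nonempty := by
  obtain ⟨v, c, hc, rfl⟩ := hC
  exact List.toFinset_nonempty_iff _ |>.mpr (edges_eq_nil.not.mpr hc.not_nil)

theorem IsCircuit.delV_of_forall_notMem (hC : IsCircuit G C) (hu : ∀ e ∈ C, u ∉ e) :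
    IsCircuit (delV G u) C := by
  obtain ⟨v, c, hc, rfl⟩ := hC
  have h : ∀ e ∈ c.edges, e ∈ (delV G u).edgeSet := fun e he =>
    mem_edgeSet_delV.mpr ⟨c.edges_subset_edgeSet he, hu e (List.mem_toFinset.mpr he)⟩
  exact ⟨v, c.transfer _ h, hc.transfer h, by rw [edges_transfer]⟩

theorem IsCircuit.exists_eq_insert_insert (hC : IsCircuit G C) {t : α} (ht : s(u, t) ∈ C) :
    ∃ s, G.Adj u s ∧ ∃ q : G.Walk s t, q.IsPath ∧ u ∉ q.support ∧ s ≠ t ∧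
      C = insert s(u, s) (insert s(u, t) q.edges.toFinset) := by
  obtain ⟨v, c, hc, rfl⟩ := hC
  have hu : u ∈ c.support := c.fst_mem_support_of_mem_edges (List.mem_toFinset.mp ht)
  obtain ⟨a, b, ha, hb, q, hq, hqu, hab, hedges⟩ := (hc.rotate hu).exists_isPath_edges_toFinset_eq
  rw [← List.toFinset_eq_of_perm _ _ (c.rotate_edges u hu).perm, hedges] at ht ⊢
  simp only [Finset.mem_insert, List.mem_toFinset, Sym2.congr_right] at ht
  rcases ht with rfl | rfl | ht
  · refine ⟨b, hb, q.reverse, hq.reverse, by simpa using hqu, hab.symm, ?_⟩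
    rw [Finset.insert_comm, edges_reverse, List.toFinset_reverse]
  · exact ⟨a, ha, q, hq, hqu, hab, rfl⟩
  · exact absurd (q.fst_mem_support_of_mem_edges ht) hqu

theorem isCircuit_insert_insert {s t : α} (hs : G.Adj u s) (ht : G.Adj u t) {q : G.Walk s t}
    (hq : q.IsPath) (hu : u ∉ q.support) (hst : s ≠ t) :
    IsCircuit G (insert s(u, s) (insert s(u, t) q.edges.toFinset)) := by
  refine ⟨u, _, isCycle_cons_reverse_cons hs ht hq hu hst, ?_⟩
  rw [edges_cons, List.toFinset_cons, edges_reverse, List.toFinset_reverse, edges_cons,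
    List.toFinset_cons, edges_reverse, List.toFinset_reverse]

theorem isAcyclic_fromEdgeSet_of_forall_isCircuit {F : Finset (Sym2 α)}
    (hF : ∀ e ∈ F, e ∈ G.edgeSet) (h : ∀ C, IsCircuit G C → ¬ C ⊆ F) :
    (fromEdgeSet (F : Set (Sym2 α))).IsAcyclic := by
  intro v c hc
  have hcF : ∀ e ∈ c.edges, e ∈ F := fun e he =>
    ((edgeSet_fromEdgeSet _).le (c.edges_subset_edgeSet he)).1
  refine h _ ⟨v, c.transfer G fun e he => hF e (hcF e he), hc.transfer _, by rw [edges_transfer]⟩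
    fun e he => hcF e (List.mem_toFinset.mp he)

theorem mem_of_mem_union_image {S : Finset α} {F : Finset (Sym2 α)} {e : Sym2 α}
    (he : e ∈ F ∪ S.image (s(u, ·))) (hu : u ∉ e) : e ∈ F := by
  rcases Finset.mem_union.mp he with he | he
  · exact he
  · obtain ⟨s, -, rfl⟩ := Finset.mem_image.mp he
    exact absurd (Sym2.mem_mk_left _ _) hu

theorem mem_of_mk_mem_union_image {S : Finset α} {F : Finset (Sym2 α)} (hF : ∀ e ∈ F, u ∉ e)
    {a : α} (h : s(u, a) ∈ F ∪ S.image (s(u, ·))) : a ∈ S := by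
  rcases Finset.mem_union.mp h with h | h
  · exact absurd (Sym2.mem_mk_left _ _) (hF _ h)
  · obtain ⟨s, hs, he⟩ := Finset.mem_image.mp h
    rwa [← Sym2.congr_right.mp he]

end Circuits

theorem IsBCF.mem_edgeSet {H : SimpleGraph V} {ord : Sym2 V → ℕ} {F : Finset (Sym2 V)}
    (hF : IsBCF H ord F) {e : Sym2 V} (he : e ∈ F) : e ∈ H.edgeSet :=
  H.mem_edgeFinset.mp (hF.1 he)

theorem IsBCF.notMem_of_mem {G : SimpleGraph V} {u : V} {ord : Sym2 V → ℕ} {F : Finset (Sym2 V)}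
    (hF : IsBCF (delV G u) ord F) {e : Sym2 V} (he : e ∈ F) : u ∉ e :=
  (mem_edgeSet_delV.mp (hF.mem_edgeSet he)).2

theorem mem_edgeSupp {F : Finset (Sym2 V)} {a : V} : a ∈ edgeSupp F ↔ ∃ e ∈ F, a ∈ e := by
  simp [edgeSupp]

theorem mem_edgeSupp_of_reachable {F : Finset (Sym2 V)} {a b : V}
    (h : (fromEdgeSet (F : Set (Sym2 V))).Reachable a b) (hab : a ≠ b) : a ∈ edgeSupp F := by
  obtain ⟨p⟩ := h
  obtain ⟨x, hx, -, -⟩ := exists_eq_cons_of_ne hab p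
  exact mem_edgeSupp.mpr ⟨s(a, x), ((fromEdgeSet_adj _).mp hx).1, Sym2.mem_mk_left _ _⟩

section Extension

variable {G : SimpleGraph V} {ord : Sym2 V → ℕ} {u : V} {S : Finset V} {F : Finset (Sym2 V)}

theorem IsCircuit.exists_reachable_of_erase_subset_union_image {C : Finset (Sym2 V)}
    (hC : IsCircuit G C) (hbig : ∀ f ∈ G.edgeSet, u ∈ f → ∀ g ∈ G.edgeSet, u ∉ g → ord g < ord f)
    (hF : IsBCF (delV G u) ord F) {e : Sym2 V} (he : e ∈ C) (hmax : ∀ f ∈ C, ord f ≤ ord e)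
    (hsub : C.erase e ⊆ F ∪ S.image (s(u, ·))) :
    ∃ s ∈ S, ∃ t, e = s(u, t) ∧ (fromEdgeSet (F : Set (Sym2 V))).Reachable s t ∧ s ≠ t ∧
      ord s(u, s) ≤ ord s(u, t) := by
  by_cases hu : ∀ f ∈ C, u ∉ f
  · exact absurd (fun f hf => mem_of_mem_union_image (hsub hf) (hu f (Finset.mem_of_mem_erase hf)))
      (hF.2 _ ⟨C, hC.delV_of_forall_notMem hu, e, he, hmax, rfl⟩)
  obtain ⟨f, hfC, huf⟩ : ∃ f ∈ C, u ∈ f := by simpa using hu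
  have hue : u ∈ e := by
    by_contra hue
    exact (hmax f hfC).not_gt (hbig f (hC.mem_edgeSet hfC) huf e (hC.mem_edgeSet he) hue)
  obtain ⟨t, rfl⟩ := Sym2.mem_iff_exists.mp hue
  obtain ⟨s, -, q, -, hqu, hst, rfl⟩ := hC.exists_eq_insert_insert he
  have hus : s(u, s) ∈ (insert s(u, s) (insert s(u, t) q.edges.toFinset)).erase s(u, t) :=
    Finset.mem_erase.mpr ⟨hst ∘ Sym2.congr_right.mp, Finset.mem_insert_self _ _⟩
  refine ⟨s, mem_of_mk_mem_union_image (fun _ => hF.notMem_of_mem) (hsub hus), t, rfl, ?_, hst,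
    hmax _ (Finset.mem_insert_self _ _)⟩
  refine reachable_fromEdgeSet_of_forall_mem_edges q fun f hf => ?_
  have hfu : u ∉ f := fun h => hqu (mem_support_iff_exists_mem_edges.mpr (Or.inr ⟨f, hf, h⟩))
  refine mem_of_mem_union_image (hsub (Finset.mem_erase.mpr ⟨?_, ?_⟩)) hfu
  · rintro rfl
    exact hfu (Sym2.mem_mk_left _ _)
  · exact Finset.mem_insert_of_mem (Finset.mem_insert_of_mem (List.mem_toFinset.mpr hf))

theorem exists_isBrokenCircuit_subset_union_image
    (hbig : ∀ f ∈ G.edgeSet, u ∈ f → ∀ g ∈ G.edgeSet, u ∉ g → ord g < ord f)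
    (hF : IsBCF (delV G u) ord F) {s t : V} (hs : G.Adj u s) (hsS : s ∈ S) (ht : G.Adj u t)
    (hst : (fromEdgeSet (F : Set (Sym2 V))).Reachable s t) (hlt : ord s(u, s) < ord s(u, t)) :
    ∃ B, IsBrokenCircuit G ord B ∧ B ⊆ F ∪ S.image (s(u, ·)) := by
  have hne : s ≠ t := by
    rintro rfl
    exact lt_irrefl _ hlt
  obtain ⟨q, hq, hqF⟩ :=
    hst.exists_isPath_of_fromEdgeSet fun e he => (mem_edgeSet_delV.mp (hF.mem_edgeSet he)).1
  have hqu : ∀ f ∈ q.edges, u ∉ f := fun f hf => hF.notMem_of_mem (hqF f hf)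
  have hu : u ∉ q.support := by
    rw [mem_support_iff_exists_mem_edges]
    rintro (h | ⟨f, hf, huf⟩)
    · exact ht.ne h
    · exact hqu f hf huf
  refine ⟨_, ⟨_, isCircuit_insert_insert hs ht hq hu hne, s(u, t),
    Finset.mem_insert_of_mem (Finset.mem_insert_self _ _), ?_, rfl⟩, ?_⟩
  · simp only [Finset.mem_insert, List.mem_toFinset]
    rintro f (rfl | rfl | hf)
    · exact hlt.le
    · exact le_rfl
    · exact (hbig _ (G.mem_edgeSet.mpr ht) (Sym2.mem_mk_left _ _) f
        (q.edges_subset_edgeSet hf) (hqu f hf)).le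
  · intro f hf
    obtain ⟨hft, hf⟩ := Finset.mem_erase.mp hf
    simp only [Finset.mem_insert, List.mem_toFinset] at hf
    rcases hf with rfl | rfl | hf
    · exact Finset.mem_union_right _ (Finset.mem_image_of_mem _ hsS)
    · exact absurd rfl hft
    · exact Finset.mem_union_left _ (hqF f hf)

theorem mem_edgeSet_of_mem_union_image (hS : ∀ s ∈ S, G.Adj u s) (hF : IsBCF (delV G u) ord F)
    {e : Sym2 V} (he : e ∈ F ∪ S.image (s(u, ·))) : e ∈ G.edgeSet := by
  rcases Finset.mem_union.mp he with he | he
  · exact (mem_edgeSet_delV.mp (hF.mem_edgeSet he)).1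
  · obtain ⟨s, hs, rfl⟩ := Finset.mem_image.mp he
    exact G.mem_edgeSet.mpr (hS s hs)

theorem isAcyclic_fromEdgeSet_union_image (hS : ∀ s ∈ S, G.Adj u s)
    (hbig : ∀ f ∈ G.edgeSet, u ∈ f → ∀ g ∈ G.edgeSet, u ∉ g → ord g < ord f)
    (hF : IsBCF (delV G u) ord F)
    (hone : ∀ a ∈ edgeSupp F, ∃! s, s ∈ S ∧ (fromEdgeSet (F : Set (Sym2 V))).Reachable a s) :
    (fromEdgeSet (↑(F ∪ S.image (s(u, ·))) : Set (Sym2 V))).IsAcyclic := by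
  refine isAcyclic_fromEdgeSet_of_forall_isCircuit (fun e => mem_edgeSet_of_mem_union_image hS hF)
    fun C hC hCT => ?_
  obtain ⟨e, he, hmax⟩ := C.exists_max_image ord hC.nonempty
  obtain ⟨s, hsS, t, rfl, hst, hne, -⟩ :=
    hC.exists_reachable_of_erase_subset_union_image hbig hF he hmax ((C.erase_subset e).trans hCT)
  have htS : t ∈ S := mem_of_mk_mem_union_image (fun _ => hF.notMem_of_mem) (hCT he)
  obtain ⟨_, -, huniq⟩ := hone s (mem_edgeSupp_of_reachable hst hne)
  exact hne ((huniq s ⟨hsS, .rfl⟩).trans (huniq t ⟨htS, hst⟩).symm)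

theorem reachable_of_mem_edgeSupp_union_image (hS : ∀ s ∈ S, G.Adj u s)
    (hone : ∀ a ∈ edgeSupp F, ∃ s, s ∈ S ∧ (fromEdgeSet (F : Set (Sym2 V))).Reachable a s)
    {a : V} (ha : a ∈ edgeSupp (F ∪ S.image (s(u, ·)))) :
    (fromEdgeSet (↑(F ∪ S.image (s(u, ·))) : Set (Sym2 V))).Reachable a u := by
  have hadj : ∀ s ∈ S, (fromEdgeSet (↑(F ∪ S.image (s(u, ·))) : Set (Sym2 V))).Adj u s :=
    fun s hs => (fromEdgeSet_adj _).mpr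
      ⟨Finset.mem_union_right _ (Finset.mem_image_of_mem _ hs), (hS s hs).ne⟩
  simp only [mem_edgeSupp, Finset.mem_union, Finset.mem_image] at ha
  obtain ⟨e, he | ⟨s, hs, rfl⟩, hae⟩ := ha
  · obtain ⟨s, hs, has⟩ := hone a (mem_edgeSupp.mpr ⟨e, he, hae⟩)
    exact (has.mono (fromEdgeSet_mono (Finset.coe_subset.mpr Finset.subset_union_left))).trans
      (hadj s hs).symm.reachable
  · rcases Sym2.mem_iff.mp hae with rfl | rfl
    · rfl
    · exact (hadj _ hs).symm.reachable

end Extension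

theorem bcf_tree_extension_general (G : SimpleGraph V) (ord : Sym2 V → ℕ)
    (hord : Set.InjOn ord G.edgeSet) (u : V) (S : Finset V)
    (hS : ∀ s ∈ S, G.Adj u s)
    (hbig : ∀ f ∈ G.edgeSet, u ∈ f → ∀ g ∈ G.edgeSet, u ∉ g → ord g < ord f)
    (F : Finset (Sym2 V)) (hF : IsBCF (delV G u) ord F)
    (hone : ∀ a ∈ edgeSupp F, ∃! s, s ∈ S ∧
      (SimpleGraph.fromEdgeSet (↑F : Set (Sym2 V))).Reachable a s) :
    IsSubtree G (F ∪ S.image fun s => s(u, s)) ∧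
      ((∃ B, IsBrokenCircuit G ord B ∧ B ⊆ F ∪ S.image fun s => s(u, s)) ↔
        ∃ s ∈ S, ∃ t, G.Adj u t ∧
          (SimpleGraph.fromEdgeSet (↑F : Set (Sym2 V))).Reachable s t ∧
          ord s(u, s) < ord s(u, t)) := by
  have hreach {a} :=
    reachable_of_mem_edgeSupp_union_image (a := a) hS fun b hb => (hone b hb).exists
  refine ⟨⟨fun e he => G.mem_edgeFinset.mpr (mem_edgeSet_of_mem_union_image hS hF he),
    isAcyclic_fromEdgeSet_union_image hS hbig hF hone,
    fun a ha b hb => (hreach ha).trans (hreach hb).symm⟩, ⟨?_, ?_⟩⟩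
  · rintro ⟨B, ⟨C, hC, e, he, hmax, rfl⟩, hBT⟩
    obtain ⟨s, hsS, t, rfl, hst, hne, hle⟩ :=
      hC.exists_reachable_of_erase_subset_union_image hbig hF he hmax hBT
    have ht : G.Adj u t := G.mem_edgeSet.mp (hC.mem_edgeSet he)
    refine ⟨s, hsS, t, ht, hst, hle.lt_of_ne fun h => hne ?_⟩
    exact Sym2.congr_right.mp (hord (G.mem_edgeSet.mpr (hS s hsS)) (G.mem_edgeSet.mpr ht) h)
  · rintro ⟨s, hsS, t, ht, hst, hlt⟩
    exact exists_isBrokenCircuit_subset_union_image hbig hF (hS s hsS) hsS ht hst hlt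

/-- Proposition 2.4: let `u ∈ V`, `S ⊆ N(u)` and `V' = V - u`; suppose the edges
incident to `u` are largest in the edge ordering. If `F` is a BCF forest of `G[V']`
each of whose non-trivial components contains exactly one vertex of `S`, and every
vertex of `S` lies in a non-trivial component of `F`, then `T = F ∪ {us : s ∈ S}` is a
tree, and `T` contains a broken circuit iff there is `s ∈ S` whose component in `F`
contains some `t ∈ N(u)` with `us < ut`. -/
theorem bcf_tree_extension (G : SimpleGraph V) (ord : Sym2 V → ℕ)
    (hord : Set.InjOn ord G.edgeSet) (u : V) (S : Finset V)
    (hS : ∀ s ∈ S, G.Adj u s)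
    (hbig : ∀ f ∈ G.edgeSet, u ∈ f → ∀ g ∈ G.edgeSet, u ∉ g → ord g < ord f)
    (F : Finset (Sym2 V)) (hF : IsBCF (delV G u) ord F)
    (hone : ∀ a ∈ edgeSupp F, ∃! s, s ∈ S ∧
      (SimpleGraph.fromEdgeSet (↑F : Set (Sym2 V))).Reachable a s)
    (hcov : ∀ s ∈ S, s ∈ edgeSupp F) :
    IsSubtree G (F ∪ S.image fun s => s(u, s)) ∧
      ((∃ B, IsBrokenCircuit G ord B ∧ B ⊆ F ∪ S.image fun s => s(u, s)) ↔
        ∃ s ∈ S, ∃ t, G.Adj u t ∧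
          (SimpleGraph.fromEdgeSet (↑F : Set (Sym2 V))).Reachable s t ∧
          ord s(u, s) < ord s(u, t)) :=
  bcf_tree_extension_general G ord hord u S hS hbig F hF hone
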